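/- arXiv:1801.10608 — 7 statements merged into one kernel-verified Lean document; each statement's English description precedes it below -/
import Mathlib

section
/- Let n ≥ 1, σ ∈ S_{2n}, and let w be the element of minimal length in the double coset O_σ. Then there exists an admissible sequence [k_n, k_{n−1}, …, k_1] of nonnegative integers such that w = c_{k_n,n} c_{k_{n−1},n−1} ⋯ c_{k_1,1} and ℓ(w) = k_n + k_{n−1} + ⋯ + k_1 (so this product is a minimal decomposition of w). -/
/-!
Minimality of `w` in `S w S` means that neither `w` nor `w⁻¹` has a descent among the first `n`
positions: an adjacent transposition of `S`, on the right or on the left, would shorten it.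

Write `w` through its Lehmer code `k_q = #{i < q | w q < w i}`, whose sum is `ℓ(w)`. Peeling off,
from the last position downwards, the cycle that moves position `q` to `w q` (a product of `k_q`
adjacent transpositions) gives `w = ∏_q c(q, k_q)`; the codes at the first `n` positions vanish
since `w` is increasing there, and what is left is `c_{k_n,n} ⋯ c_{k_1,1}`.

Admissibility uses that `w⁻¹` is increasing on the small values `< n`: every inversion partner of
a position `q` carries a large value. If some small value sits after `q`, the first one, at
position `p`, inherits all inversions of `q` together with all positions strictly between `q` and
`p`. Otherwise the `n` small values fill `n` of the `q + 1` positions up to `q`, leaving room for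
at most `q + 1 - n` partners.
-/

/-- The subgroup `S ⊆ S_{2n}` of permutations fixing each of the last `n` points
(`n+1, …, 2n` in one-based terms, i.e. the indices `i` with `n ≤ i` in zero-based terms). -/
def Sfix (n : ℕ) : Set (Equiv.Perm (Fin (2 * n))) :=
  {g | ∀ i : Fin (2 * n), n ≤ (i : ℕ) → g i = i}

/-- The double coset `O_σ = {g σ h : g, h ∈ S}`. -/
def dcoset (n : ℕ) (σ : Equiv.Perm (Fin (2 * n))) : Set (Equiv.Perm (Fin (2 * n))) :=
  {t | ∃ g ∈ Sfix n, ∃ h ∈ Sfix n, t = g * σ * h}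

/-- The length of a permutation: its number of inversions. -/
noncomputable def len (n : ℕ) (σ : Equiv.Perm (Fin (2 * n))) : ℕ :=
  {p : Fin (2 * n) × Fin (2 * n) | p.1 < p.2 ∧ σ p.2 < σ p.1}.ncard

/-- The adjacent transposition `s_i = (i, i+1)` of `{1, …, m}` (one-based), i.e. the swap
of the zero-based positions `i-1` and `i`; it is the identity for out-of-range `i`. -/
def sTrans (m i : ℕ) : Equiv.Perm (Fin m) :=
  if h : 1 ≤ i ∧ i < m then
    Equiv.swap ⟨i - 1, by omega⟩ ⟨i, h.2⟩
  else 1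

/-- The cycle `c_{k,j} = s_{j+n-k} s_{j+n-k+1} ⋯ s_{j+n-1} ∈ S_{2n}` (with `c_{0,j} = e`). -/
def cyc (n k j : ℕ) : Equiv.Perm (Fin (2 * n)) :=
  ((List.range k).map fun t => sTrans (2 * n) (j + n - k + t)).prod

/-- The product `c_{k_n,n} c_{k_{n-1},n-1} ⋯ c_{k_1,1} ∈ S_{2n}` associated to a sequence
`[k_n, …, k_1]` (encoded as a function `k : ℕ → ℕ` on the indices `1, …, n`). -/
def cycProd (n : ℕ) (k : ℕ → ℕ) : Equiv.Perm (Fin (2 * n)) :=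
  ((List.range n).map fun t => cyc n (k (n - t)) (n - t)).prod

/-- The bound `max (max_{j < i ≤ n} (k_i + j + 1 - i)) j` appearing in admissibility. -/
def admBound (n : ℕ) (k : ℕ → ℕ) (j : ℕ) : ℕ :=
  max ((Finset.Ioc j n).sup fun i => k i + j + 1 - i) j

/-- A sequence `[k_n, …, k_1]` of nonnegative integers is admissible if
`k_j ≤ max (max_{j < i ≤ n} (k_i + j + 1 - i)) j` for every `1 ≤ j ≤ n`. -/
def Admissible (n : ℕ) (k : ℕ → ℕ) : Prop :=
  ∀ j, 1 ≤ j → j ≤ n → k j ≤ admBound n k j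

open Finset

section Inversions

variable {m : ℕ}

def inversions (v : Equiv.Perm (Fin m)) : Finset (Fin m × Fin m) :=
  {p | p.1 < p.2 ∧ v p.2 < v p.1}

lemma mem_inversions {v : Equiv.Perm (Fin m)} {p : Fin m × Fin m} :
    p ∈ inversions v ↔ p.1 < p.2 ∧ v p.2 < v p.1 := by
  simp [inversions]

lemma len_eq_card_inversions (n : ℕ) (v : Equiv.Perm (Fin (2 * n))) :
    len n v = #(inversions v) := by
  rw [len, ← Set.ncard_coe_finset]
  congr 1
  ext p
  simp [mem_inversions]

lemma card_inversions_inv (v : Equiv.Perm (Fin m)) : #(inversions v⁻¹) = #(inversions v) := by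
  refine card_nbij' (fun p => (v⁻¹ p.2, v⁻¹ p.1)) (fun p => (v p.2, v p.1)) ?_ ?_ ?_ ?_ <;>
    intro p <;> simp +contextual [mem_inversions]

lemma swap_lt_swap_of_lt {a b p q : Fin m} (hab : (a : ℕ) + 1 = b) (hpq : p < q)
    (hne : (p, q) ≠ (a, b)) : Equiv.swap a b p < Equiv.swap a b q := by
  simp only [ne_eq, Prod.mk.injEq, Fin.lt_def, Fin.ext_iff, Equiv.swap_apply_def] at *
  split_ifs <;> simp_all <;> omega

lemma card_inversions_mul_swap_lt (v : Equiv.Perm (Fin m)) {a b : Fin m}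
    (hab : (a : ℕ) + 1 = b) (h : v b < v a) :
    #(inversions (v * Equiv.swap a b)) < #(inversions v) := by
  have hmem : (a, b) ∈ inversions v := mem_inversions.2 ⟨(Fin.lt_def.2 (by omega) : a < b), h⟩
  calc #(inversions (v * Equiv.swap a b))
      ≤ #((inversions v).erase (a, b)) := by
        refine card_le_card_of_injOn (fun p => (Equiv.swap a b p.1, Equiv.swap a b p.2))
          ?_ ?_
        · rintro ⟨p, q⟩ hpq
          obtain ⟨hlt, hinv⟩ := mem_inversions.1 hpq
          simp only [Equiv.Perm.mul_apply] at hlt hinv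
          have hne : (p, q) ≠ (a, b) := by
            rintro ⟨⟩
            simp only [Equiv.swap_apply_left, Equiv.swap_apply_right] at hinv
            exact lt_asymm h hinv
          refine mem_erase.2
            ⟨fun he => ?_, mem_inversions.2 ⟨swap_lt_swap_of_lt hab hlt hne, hinv⟩⟩
          simp only [Prod.mk.injEq, Equiv.swap_apply_eq_iff, Equiv.swap_apply_left,
            Equiv.swap_apply_right] at he
          rw [he.1, he.2, Fin.lt_def] at hlt
          omega
        · intro p _ q _ hpq
          simpa [Prod.ext_iff] using hpq
    _ < #(inversions v) := card_erase_lt_of_mem hmem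

end Inversions

lemma strictMonoOn_of_lt_of_val_add_one {m n : ℕ} {α : Type*} [Preorder α] {f : Fin m → α}
    (hf : ∀ a b : Fin m, (a : ℕ) + 1 = b → (b : ℕ) < n → f a < f b) :
    StrictMonoOn f {i | (i : ℕ) < n} := by
  have key : ∀ d, ∀ p q : Fin m, (q : ℕ) = p + 1 + d → (q : ℕ) < n → f p < f q := by
    intro d
    induction d with
    | zero => exact fun p q hq hqn => hf p q hq.symm hqn
    | succ d ih =>
      intro p q hq hqn
      exact (ih p ⟨q - 1, by omega⟩ (by simp; omega) (by simp; omega)).trans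
        (hf _ q (by simp; omega) hqn)
  intro p _ q hqn hpq
  exact key (q - p - 1) p q (by rw [Fin.lt_def] at hpq; omega) hqn

section DoubleCoset

variable {n : ℕ} {σ w : Equiv.Perm (Fin (2 * n))}

lemma swap_mem_Sfix {a b : Fin (2 * n)} (ha : (a : ℕ) < n) (hb : (b : ℕ) < n) :
    Equiv.swap a b ∈ Sfix n := fun i hi =>
  Equiv.swap_apply_of_ne_of_ne (by rintro rfl; omega) (by rintro rfl; omega)

lemma Sfix_mul {g h : Equiv.Perm (Fin (2 * n))} (hg : g ∈ Sfix n) (hh : h ∈ Sfix n) :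
    g * h ∈ Sfix n := fun i hi => by
  rw [Equiv.Perm.mul_apply, hh i hi, hg i hi]

lemma mul_mem_dcoset {s : Equiv.Perm (Fin (2 * n))} (hw : w ∈ dcoset n σ) (hs : s ∈ Sfix n) :
    w * s ∈ dcoset n σ := by
  obtain ⟨g, hg, h, hh, rfl⟩ := hw
  exact ⟨g, hg, h * s, Sfix_mul hh hs, by rw [mul_assoc]⟩

lemma mul_mem_dcoset_left {s : Equiv.Perm (Fin (2 * n))} (hw : w ∈ dcoset n σ)
    (hs : s ∈ Sfix n) : s * w ∈ dcoset n σ := by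
  obtain ⟨g, hg, h, hh, rfl⟩ := hw
  exact ⟨s * g, Sfix_mul hs hg, h, hh, by simp only [mul_assoc]⟩

variable (hw : w ∈ dcoset n σ) (hmin : ∀ t ∈ dcoset n σ, len n w ≤ len n t)
include hw hmin

lemma strictMonoOn_of_len_minimal : StrictMonoOn w {i | (i : ℕ) < n} := by
  refine strictMonoOn_of_lt_of_val_add_one fun a b hab hb => lt_of_not_ge fun hba => ?_
  have hlt : w b < w a := hba.lt_of_ne (w.injective.ne (by rintro rfl; omega))
  have := hmin _ (mul_mem_dcoset hw (swap_mem_Sfix (a := a) (by omega) hb))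
  rw [len_eq_card_inversions, len_eq_card_inversions] at this
  exact this.not_gt (card_inversions_mul_swap_lt w hab hlt)

lemma strictMonoOn_inv_of_len_minimal : StrictMonoOn ⇑(w⁻¹) {i | (i : ℕ) < n} := by
  refine strictMonoOn_of_lt_of_val_add_one fun a b hab hb => lt_of_not_ge fun hba => ?_
  have hlt : w⁻¹ b < w⁻¹ a := hba.lt_of_ne ((w⁻¹).injective.ne (by rintro rfl; omega))
  have := hmin _ (mul_mem_dcoset_left hw (swap_mem_Sfix (a := a) (b := b) (by omega) hb))
  rw [len_eq_card_inversions, len_eq_card_inversions, ← card_inversions_inv w,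
    ← card_inversions_inv (_ * w), mul_inv_rev, Equiv.swap_inv] at this
  exact this.not_gt (card_inversions_mul_swap_lt w⁻¹ hab hlt)

end DoubleCoset

section LehmerCode

variable {m : ℕ} (v : Equiv.Perm (Fin m))

def lehmerCode (q : ℕ) : ℕ := #{p ∈ inversions v | (p.2 : ℕ) = q}

lemma card_inversions_eq_sum_lehmerCode : #(inversions v) = ∑ q ∈ range m, lehmerCode v q :=
  card_eq_sum_card_fiberwise fun p _ => mem_range.2 p.2.2

lemma lehmerCode_eq_card (q : Fin m) : lehmerCode v q = #{i | i < q ∧ v q < v i} := by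
  refine card_nbij' Prod.fst (fun i => (i, q)) ?_ ?_ ?_ ?_
  · rintro ⟨i, p⟩ h
    simp only [coe_filter, mem_inversions, Set.mem_ofPred_eq, Fin.val_inj] at h
    obtain ⟨⟨hip, hv⟩, rfl⟩ := h
    simp [hip, hv]
  · intro i hi
    simp_all [mem_inversions]
  · rintro ⟨i, p⟩ h
    simp only [coe_filter, mem_inversions, Set.mem_ofPred_eq, Fin.val_inj] at h
    simp [h.2]
  · intro i _
    rfl

lemma lehmerCode_le (q : Fin m) : lehmerCode v q ≤ q := by
  rw [lehmerCode_eq_card, ← Fin.card_Iio]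
  exact card_le_card fun i hi => mem_Iio.2 (mem_filter.1 hi).2.1

lemma lehmerCode_eq_zero_of_strictMonoOn {n q : ℕ} (hv : StrictMonoOn v {i | (i : ℕ) < n})
    (hq : q < n) : lehmerCode v q = 0 := by
  refine card_eq_zero.2 (filter_eq_empty_iff.2 fun ⟨i, p⟩ hip hp => ?_)
  obtain ⟨hlt, hinv⟩ := mem_inversions.1 hip
  simp only at hp hlt hinv
  have hpn : (p : ℕ) < n := hp ▸ hq
  exact lt_asymm hinv (hv ((Fin.lt_def.1 hlt).trans hpn) hpn hlt)

end LehmerCode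

section CycleDown

variable {m : ℕ}

lemma val_sTrans_apply {i : ℕ} (hi : 1 ≤ i) (him : i < m) (x : Fin m) :
    (sTrans m i x : ℕ) = if (x : ℕ) = i - 1 then i else if (x : ℕ) = i then i - 1 else x := by
  simp only [sTrans, dif_pos (And.intro hi him), Equiv.swap_apply_def, Fin.ext_iff]
  split_ifs <;> simp_all

def cycleDown (m q k : ℕ) : Equiv.Perm (Fin m) :=
  ((List.range k).map fun t => sTrans m (q + 1 - k + t)).prod

@[simp]
lemma cycleDown_zero (q : ℕ) : cycleDown m q 0 = 1 := rfl

lemma cycleDown_succ {q k : ℕ} (hk : k ≤ q) :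
    cycleDown m q (k + 1) = sTrans m (q - k) * cycleDown m q k := by
  rw [cycleDown, List.range_succ_eq_map, List.map_cons, List.prod_cons, List.map_map]
  congr 3
  · omega
  · funext t
    simp only [Function.comp_apply]
    congr 1
    omega

lemma val_cycleDown_apply {q k : ℕ} (hk : k ≤ q) (hq : q < m) (x : Fin m) :
    (cycleDown m q k x : ℕ) =
      if (x : ℕ) = q then q - k else if q - k ≤ x ∧ (x : ℕ) < q then x + 1 else x := by
  induction k with
  | zero => simp only [cycleDown_zero, Equiv.Perm.one_apply]; split_ifs <;> omega
  | succ k ih =>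
    rw [cycleDown_succ (by omega), Equiv.Perm.mul_apply, val_sTrans_apply (by omega) (by omega),
      ih (by omega)]
    split_ifs <;> omega

lemma cyc_eq_cycleDown (n k : ℕ) {j : ℕ} (hj : 1 ≤ j) :
    cyc n k j = cycleDown (2 * n) (n + j - 1) k := by
  rw [cyc, cycleDown, show n + j - 1 + 1 = j + n by omega]

lemma cycleDown_lt_cycleDown_iff {q k : ℕ} (hk : k ≤ q) (hq : q < m) {x y : Fin m}
    (hx : (x : ℕ) ≠ q) (hy : (y : ℕ) ≠ q) :
    cycleDown m q k x < cycleDown m q k y ↔ x < y := by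
  rw [Fin.lt_def, Fin.lt_def, val_cycleDown_apply hk hq, val_cycleDown_apply hk hq]
  split_ifs <;> omega

lemma cycleDown_apply_of_lt {q k : ℕ} (hk : k ≤ q) (hq : q < m) {x : Fin m}
    (hx : q < (x : ℕ)) :
    cycleDown m q k x = x :=
  Fin.ext (by rw [val_cycleDown_apply hk hq]; split_ifs <;> omega)

end CycleDown

section Factorization

variable {m : ℕ} {v : Equiv.Perm (Fin m)} {q : Fin m}

lemma apply_le_of_forall_lt_apply_eq (hv : ∀ i, q < i → v i = i) : v q ≤ q :=
  le_of_not_gt fun h => h.ne' (v.injective (hv _ h))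

lemma lehmerCode_eq_sub_of_forall_lt_apply_eq (hv : ∀ i, q < i → v i = i) :
    lehmerCode v q = q - v q := by
  rw [lehmerCode_eq_card, ← Fin.card_Ioc]
  refine card_nbij' v v.symm ?_ ?_ ?_ ?_
  · intro i hi
    simp only [coe_filter, mem_univ, true_and, Set.mem_ofPred_eq, coe_Ioc, Set.mem_Ioc] at hi ⊢
    obtain ⟨hiq, hvi⟩ := hi
    refine ⟨hvi, le_of_not_gt fun h => ?_⟩
    rw [v.injective (hv _ h)] at h
    exact lt_asymm hiq h
  · intro y hy
    simp only [coe_filter, mem_univ, true_and, Set.mem_ofPred_eq, coe_Ioc, Set.mem_Ioc] at hy ⊢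
    obtain ⟨hqy, hyq⟩ := hy
    simp only [Equiv.apply_symm_apply]
    refine ⟨lt_of_le_of_ne (le_of_not_gt fun h => ?_) ?_, hqy⟩
    · have := hv _ h
      rw [Equiv.apply_symm_apply] at this
      rw [this] at hyq
      exact hyq.not_gt h
    · rintro hq
      rw [← hq, Equiv.apply_symm_apply] at hqy
      exact lt_irrefl _ hqy
  · intro i _; simp
  · intro i _; simp

variable (hv : ∀ i, q < i → v i = i)
include hv

lemma cycleDown_lehmerCode_apply_self : cycleDown m q (lehmerCode v q) q = v q := by
  have hle := apply_le_of_forall_lt_apply_eq hv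
  rw [Fin.le_def] at hle
  refine Fin.ext ?_
  rw [val_cycleDown_apply (lehmerCode_le v q) q.isLt,
    if_pos rfl, lehmerCode_eq_sub_of_forall_lt_apply_eq hv]
  omega

lemma inv_cycleDown_lehmerCode_mul_apply_of_le {i : Fin m} (hi : q ≤ i) :
    ((cycleDown m q (lehmerCode v q))⁻¹ * v) i = i := by
  rw [Equiv.Perm.mul_apply, Equiv.Perm.inv_eq_iff_eq]
  rcases hi.lt_or_eq with hi | rfl
  · rw [hv i hi, cycleDown_apply_of_lt (lehmerCode_le v q) q.isLt hi]
  · exact (cycleDown_lehmerCode_apply_self hv).symm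

lemma lehmerCode_inv_cycleDown_lehmerCode_mul {p : Fin m} (hp : p < q) :
    lehmerCode ((cycleDown m q (lehmerCode v q))⁻¹ * v) p = lehmerCode v p := by
  set C := cycleDown m q (lehmerCode v q)
  set v' := C⁻¹ * v
  have hne : ∀ x, x < q → (v' x : ℕ) ≠ q := fun x hx h => by
    have : v' x = v' q :=
      (Fin.ext h).trans (inv_cycleDown_lehmerCode_mul_apply_of_le hv le_rfl).symm
    exact hx.ne (v'.injective this)
  rw [lehmerCode_eq_card, lehmerCode_eq_card]
  refine congrArg card (filter_congr fun i _ => and_congr_right fun hip => ?_)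
  rw [← cycleDown_lt_cycleDown_iff (lehmerCode_le v q) q.isLt (hne p hp) (hne i (hip.trans hp))]
  simp only [v', C, Equiv.Perm.mul_apply, Equiv.Perm.coe_inv, Equiv.apply_symm_apply]

end Factorization

theorem eq_prod_cycleDown_lehmerCode {m : ℕ} (b : ℕ) (hb : b ≤ m) (v : Equiv.Perm (Fin m))
    (hv : ∀ i : Fin m, b ≤ (i : ℕ) → v i = i) :
    v = ((List.range b).map fun t => cycleDown m (b - 1 - t) (lehmerCode v (b - 1 - t))).prod := by
  induction b generalizing v with
  | zero => ext i; simp [hv i (Nat.zero_le _)]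
  | succ b ih =>
    set q : Fin m := ⟨b, hb⟩
    have hvq : ∀ i, q < i → v i = i := fun i hi => hv i (Fin.lt_def.1 hi)
    have hrest := ih (by omega) _ fun i hi =>
      inv_cycleDown_lehmerCode_mul_apply_of_le hvq (i := i) (Fin.le_def.2 hi)
    rw [List.range_succ_eq_map, List.map_cons, List.prod_cons, List.map_map]
    have hcodes : ∀ t ∈ List.range b, lehmerCode v (b - 1 - t) =
        lehmerCode ((cycleDown m q (lehmerCode v q))⁻¹ * v) (b - 1 - t) := fun t ht => by
      have ht : t < b := List.mem_range.1 ht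
      exact (lehmerCode_inv_cycleDown_lehmerCode_mul hvq (p := ⟨b - 1 - t, by omega⟩)
        (Fin.lt_def.2 (by simp [q]; omega))).symm
    rw [List.map_congr_left fun t ht => by
        rw [Function.comp_apply, show b + 1 - 1 - (t + 1) = b - 1 - t by omega, hcodes t ht],
      ← hrest]
    simp [q]

section Admissibility

variable {m n : ℕ} {w : Equiv.Perm (Fin m)} (hw : StrictMonoOn ⇑(w⁻¹) {x | (x : ℕ) < n})
include hw

lemma le_apply_of_lt_of_apply_lt {p Q : Fin m} (hpQ : p < Q) (hinv : w Q < w p) :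
    n ≤ (w p : ℕ) := by
  by_contra! h
  have := hw (Fin.lt_def.1 hinv |>.trans h) h hinv
  simp only [Equiv.Perm.coe_inv, Equiv.symm_apply_apply] at this
  exact lt_asymm hpQ this

lemma lehmerCode_add_le_lehmerCode {Q P : Fin m} (hQP : Q < P) (hPn : (w P : ℕ) < n)
    (hPmin : ∀ x : Fin m, (x : ℕ) < n → Q < w⁻¹ x → w P ≤ x) :
    lehmerCode w Q + (P - Q - 1) ≤ lehmerCode w P := by
  rw [lehmerCode_eq_card, lehmerCode_eq_card, ← Fin.card_Ioo,
    ← card_union_of_disjoint (disjoint_left.2 fun i hi hi' => ?_)]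
  · refine card_le_card fun i hi => ?_
    simp only [mem_union, mem_filter, mem_univ, true_and, mem_Ioo] at hi ⊢
    rcases hi with ⟨hiQ, hinv⟩ | ⟨hQi, hiP⟩
    · exact ⟨hiQ.trans hQP, hPn.trans_le (le_apply_of_lt_of_apply_lt hw hiQ hinv)⟩
    · refine ⟨hiP, lt_of_le_of_ne ?_ (w.injective.ne hiP.ne')⟩
      rcases lt_or_ge (w i : ℕ) n with hin | hin
      · exact hPmin _ hin (by simpa using hQi)
      · exact Fin.le_def.2 (hPn.le.trans hin)
  · simp only [mem_filter, mem_univ, true_and, mem_Ioo] at hi hi'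
    exact lt_asymm hi.1 hi'.1

lemma lehmerCode_add_le_of_forall_inv_le {Q : Fin m} (hnm : n ≤ m)
    (hsmall : ∀ x : Fin m, (x : ℕ) < n → w⁻¹ x ≤ Q) :
    lehmerCode w Q + n ≤ Q + 1 := by
  set large : Finset (Fin m) := {i | i ≤ Q ∧ n ≤ (w i : ℕ)}
  set smallPos : Finset (Fin m) := ({x | (x : ℕ) < n} : Finset (Fin m)).image ⇑(w⁻¹)
  have hcode : lehmerCode w Q ≤ #large := by
    rw [lehmerCode_eq_card]
    exact card_le_card fun i hi => by
      simp only [large, mem_filter, mem_univ, true_and] at hi ⊢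
      exact ⟨hi.1.le, le_apply_of_lt_of_apply_lt hw hi.1 hi.2⟩
  have hsmallPos : #smallPos = n := by
    rw [card_image_of_injective _ (w⁻¹).injective, Fin.card_filter_val_lt, min_eq_right hnm]
  have hdisj : Disjoint large smallPos := disjoint_left.2 fun i hi hi' => by
    simp only [large, smallPos, mem_filter, mem_univ, true_and, mem_image] at hi hi'
    obtain ⟨x, hx, rfl⟩ := hi'
    simp only [Equiv.Perm.coe_inv, Equiv.apply_symm_apply] at hi
    omega
  calc lehmerCode w Q + n
      ≤ #(large ∪ smallPos) := by rw [card_union_of_disjoint hdisj, hsmallPos]; omega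
    _ ≤ #(Iic Q) := card_le_card fun i hi => by
        simp only [large, smallPos, mem_union, mem_filter, mem_univ, true_and, mem_image,
          mem_Iic] at hi ⊢
        rcases hi with hi | ⟨x, hx, rfl⟩
        · exact hi.1
        · exact hsmall x hx
    _ = Q + 1 := Fin.card_Iic Q

end Admissibility

theorem admissible_lehmerCode {n : ℕ} {w : Equiv.Perm (Fin (2 * n))}
    (hw : StrictMonoOn ⇑(w⁻¹) {x | (x : ℕ) < n}) :
    Admissible n fun j => lehmerCode w (n + j - 1) := by
  intro j hj hjn
  set Q : Fin (2 * n) := ⟨n + j - 1, by omega⟩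
  rw [admBound]
  by_cases hafter : ∃ x : Fin (2 * n), (x : ℕ) < n ∧ Q < w⁻¹ x
  · obtain ⟨u, ⟨hun, hQu⟩, humin⟩ := wellFounded_lt.has_min _ hafter
    set P := w⁻¹ u
    have hPn : (w P : ℕ) < n := by simpa [P] using hun
    have key : lehmerCode w (n + j - 1) + (P - (n + j - 1) - 1) ≤ lehmerCode w P :=
      lehmerCode_add_le_lehmerCode hw hQu hPn fun x hx hQx => by
        simpa [P] using not_lt.1 (humin x ⟨hx, hQx⟩)
    have hQP : n + j - 1 < (P : ℕ) := hQu
    have hPlt := P.isLt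
    refine le_max_of_le_left (le_sup_of_le (b := (P : ℕ) - n + 1) (mem_Ioc.2 ⟨?_, ?_⟩) ?_)
    · omega
    · omega
    · show lehmerCode w (n + j - 1) ≤ lehmerCode w (n + (P - n + 1) - 1) + j + 1 - (P - n + 1)
      rw [show n + ((P : ℕ) - n + 1) - 1 = P by omega]
      omega
  · simp only [not_exists, not_and, not_lt] at hafter
    have : lehmerCode w (n + j - 1) + n ≤ n + j - 1 + 1 :=
      lehmerCode_add_le_of_forall_inv_le hw (Q := Q) (by omega) hafter
    exact le_max_of_le_right (show lehmerCode w (n + j - 1) ≤ j by omega)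

section MinimalElement

variable {n : ℕ} {w : Equiv.Perm (Fin (2 * n))} (hw : StrictMonoOn w {i | (i : ℕ) < n})
include hw

lemma eq_cycProd_lehmerCode : w = cycProd n fun j => lehmerCode w (n + j - 1) := by
  have h := eq_prod_cycleDown_lehmerCode (2 * n) le_rfl w fun i hi => absurd i.isLt (by omega)
  rw [show List.range (2 * n) = List.range n ++ (List.range n).map (n + ·) by
    rw [← List.range_add, two_mul], List.map_append, List.prod_append, List.map_map,
    List.prod_eq_one (l := List.map (_ ∘ _) _) ?_, mul_one] at h
  · rw [cycProd]
    refine h.trans (congrArg List.prod (List.map_congr_left fun t ht => ?_))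
    have ht : t < n := List.mem_range.1 ht
    rw [cyc_eq_cycleDown _ _ (by omega), show n + (n - t) - 1 = 2 * n - 1 - t by omega]
  · simp only [List.mem_map, List.mem_range, Function.comp_apply]
    rintro _ ⟨t, ht, rfl⟩
    rw [lehmerCode_eq_zero_of_strictMonoOn w hw (by omega), cycleDown_zero]

lemma len_eq_sum_lehmerCode : len n w = ∑ j ∈ Icc 1 n, lehmerCode w (n + j - 1) := by
  rw [len_eq_card_inversions, card_inversions_eq_sum_lehmerCode,
    ← sum_range_add_sum_Ico _ (by omega : n ≤ 2 * n),
    sum_eq_zero fun q hq => lehmerCode_eq_zero_of_strictMonoOn w hw (mem_range.1 hq), zero_add,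
    sum_Ico_eq_sum_range, ← Ico_add_one_right_eq_Icc, sum_Ico_eq_sum_range,
    show 2 * n - n = n + 1 - 1 by omega]
  exact sum_congr rfl fun t _ => by rw [show n + (1 + t) - 1 = n + t by omega]

end MinimalElement

theorem minimal_length_cycle_decomposition_general (n : ℕ)
    (σ w : Equiv.Perm (Fin (2 * n))) (hw : w ∈ dcoset n σ)
    (hmin : ∀ t ∈ dcoset n σ, len n w ≤ len n t) :
    ∃ k : ℕ → ℕ, Admissible n k ∧ w = cycProd n k ∧
      len n w = ∑ j ∈ Finset.Icc 1 n, k j :=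
  ⟨fun j => lehmerCode w (n + j - 1),
    admissible_lehmerCode (strictMonoOn_inv_of_len_minimal hw hmin),
    eq_cycProd_lehmerCode (strictMonoOn_of_len_minimal hw hmin),
    len_eq_sum_lehmerCode (strictMonoOn_of_len_minimal hw hmin)⟩

/-- The minimal-length element `w` of a double coset `O_σ` admits a decomposition
`w = c_{k_n,n} ⋯ c_{k_1,1}` for an admissible sequence `[k_n, …, k_1]`, with
`ℓ(w) = k_n + ⋯ + k_1` (so this decomposition is minimal). -/
theorem minimal_length_cycle_decomposition (n : ℕ) (hn : 1 ≤ n)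
    (σ w : Equiv.Perm (Fin (2 * n))) (hw : w ∈ dcoset n σ)
    (hmin : ∀ t ∈ dcoset n σ, len n w ≤ len n t) :
    ∃ k : ℕ → ℕ, Admissible n k ∧ w = cycProd n k ∧
      len n w = ∑ j ∈ Finset.Icc 1 n, k j :=
  minimal_length_cycle_decomposition_general n σ w hw hmin
end

section
/- Let n ≥ 1, let [k_n, k_{n−1}, …, k_1] be an admissible sequence of nonnegative integers and let w = c_{k_n,n} c_{k_{n−1},n−1} ⋯ c_{k_1,1} ∈ S_{2n}. Then for each 1 ≤ i ≤ n one has k_i = max(max_{i<j≤n}(k_j + i + 1 − j), i) if and only if 1 ≤ w(n+i) ≤ n. -/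
/-!
Follow the point `n + i` through the factors of `w`, rightmost first. The factors `c_{k_j,j}`
with `j < i` fix it and `c_{k_i,i}` moves it down to `n + i - k_i`. Each later factor `c_{k_j,j}`
cycles the window `[n + j - k_j, n + j]`; if the point lies at distance `d` below `n + j - 1`, it
is carried up with the window when `d < k_j` and stays otherwise, so its distance below `n + j`
is `d` or `d + 1`.

The bound `b_j = admBound n k j` satisfies `b_n = n` and `b_j = max (k_{j+1}, b_{j+1} - 1)`.
With `k_{j+1} ≤ b_{j+1}` this makes `b_j ≤ d` equivalent to the same inequality one step later,
so `b_i ≤ k_i` iff the final distance is at least `b_n = n`, i.e. iff `w (n + i) ≤ n`.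
-/

lemma sTrans_apply {m i : ℕ} (h1 : 1 ≤ i) (h2 : i < m) (x : Fin m) :
    (sTrans m i x : ℕ) = if (x : ℕ) = i - 1 then i else if (x : ℕ) = i then i - 1 else x := by
  rw [sTrans, dif_pos ⟨h1, h2⟩, Equiv.swap_apply_def]
  simp only [Fin.ext_iff, apply_ite Fin.val]

lemma cyc_succ {n k j : ℕ} (h : k + 1 ≤ j + n) :
    cyc n (k + 1) j = sTrans (2 * n) (j + n - (k + 1)) * cyc n k j := by
  rw [cyc, List.range_succ_eq_map, List.map_cons, List.prod_cons, List.map_map, cyc]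
  congr 2
  refine List.map_congr_left fun t _ => ?_
  simp only [Function.comp_apply]
  congr 1
  omega

lemma cyc_apply {n k j : ℕ} (hk : k < j + n) (hj : j ≤ n) (x : Fin (2 * n)) :
    (cyc n k j x : ℕ) = if (x : ℕ) = j + n - 1 then j + n - 1 - k
      else if j + n - 1 - k ≤ x ∧ (x : ℕ) < j + n - 1 then x + 1 else x := by
  induction k with
  | zero =>
    simp only [cyc, List.range_zero, List.map_nil, List.prod_nil, Equiv.Perm.coe_one, id_eq]
    split_ifs <;> omega
  | succ k ih =>
    have := x.isLt
    rw [cyc_succ hk.le, Equiv.Perm.mul_apply, sTrans_apply (by omega) (by omega), ih (by omega)]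
    split_ifs <;> omega

def partialProd (n : ℕ) (k : ℕ → ℕ) (s : ℕ) : Equiv.Perm (Fin (2 * n)) :=
  ((List.range s).map fun t => cyc n (k (s - t)) (s - t)).prod

lemma cycProd_eq_partialProd (n : ℕ) (k : ℕ → ℕ) : cycProd n k = partialProd n k n := rfl

lemma partialProd_succ (n : ℕ) (k : ℕ → ℕ) (s : ℕ) :
    partialProd n k (s + 1) = cyc n (k (s + 1)) (s + 1) * partialProd n k s := by
  rw [partialProd, List.range_succ_eq_map, List.map_cons, List.prod_cons, List.map_map,
    partialProd]
  congr 2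
  refine List.map_congr_left fun t _ => ?_
  simp only [Function.comp_apply, Nat.succ_sub_succ]

/-- The distance below `n + i + t` (one-based) at which `c_{k_{i+t},i+t} ⋯ c_{k_1,1}` leaves
the point `n + i`. -/
def defect (k : ℕ → ℕ) (i : ℕ) : ℕ → ℕ
  | 0 => k i
  | t + 1 => if defect k i t < k (i + t + 1) then defect k i t else defect k i t + 1

lemma defect_le (k : ℕ → ℕ) (i t : ℕ) : defect k i t ≤ k i + t := by
  induction t with
  | zero => simp [defect]
  | succ t ih => simp only [defect]; split_ifs <;> omega

section PartialProd

variable {n : ℕ} {k : ℕ → ℕ} (hk : ∀ j, 1 ≤ j → j ≤ n → k j ≤ n) {i : ℕ} (hi1 : 1 ≤ i)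
  (hi2 : i ≤ n)
include hk hi1 hi2

lemma partialProd_apply_of_lt {s : ℕ} (hs : s < i) :
    (partialProd n k s ⟨n + i - 1, by omega⟩ : ℕ) = n + i - 1 := by
  induction s with
  | zero => rfl
  | succ s ih =>
    have := hk (s + 1) (by omega) (by omega)
    rw [partialProd_succ, Equiv.Perm.mul_apply, cyc_apply (by omega) (by omega), ih (by omega)]
    split_ifs <;> omega

lemma partialProd_apply_add (t : ℕ) (ht : i + t ≤ n) :
    (partialProd n k (i + t) ⟨n + i - 1, by omega⟩ : ℕ) = n + i + t - 1 - defect k i t := by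
  induction t with
  | zero =>
    obtain ⟨s, rfl⟩ : ∃ s, i = s + 1 := ⟨i - 1, by omega⟩
    have := hk (s + 1) hi1 hi2
    simp only [Nat.add_zero]
    rw [partialProd_succ, Equiv.Perm.mul_apply, cyc_apply (by omega) hi2,
      partialProd_apply_of_lt hk hi1 hi2 (Nat.lt_succ_self s)]
    simp only [defect]
    split_ifs <;> omega
  | succ t ih =>
    have := hk (i + t + 1) (by omega) ht
    have := defect_le k i t
    have := hk i hi1 hi2
    rw [← Nat.add_assoc, partialProd_succ, Equiv.Perm.mul_apply,
      cyc_apply (j := i + t + 1) (by omega) (by omega), ih (by omega)]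
    simp only [defect]
    split_ifs <;> omega

end PartialProd

@[simp]
lemma admBound_self (n : ℕ) (k : ℕ → ℕ) : admBound n k n = n := by
  simp [admBound]

section AdmBound

variable {n : ℕ} {k : ℕ → ℕ}

lemma self_le_admBound (j : ℕ) : j ≤ admBound n k j := le_max_right _ _

lemma le_admBound_of_mem {j l : ℕ} (hl : l ∈ Finset.Ioc j n) :
    k l + j + 1 - l ≤ admBound n k j :=
  (Finset.le_sup (f := fun l => k l + j + 1 - l) hl).trans (le_max_left _ _)

lemma admBound_eq_max_succ {j : ℕ} (hj : j < n) :
    admBound n k j = max (k (j + 1)) (admBound n k (j + 1) - 1) := by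
  have hsucc := self_le_admBound (n := n) (k := k) (j + 1)
  apply le_antisymm
  · refine max_le (Finset.sup_le fun l hl => ?_) (le_max_of_le_right (by omega))
    obtain ⟨hjl, hln⟩ := Finset.mem_Ioc.1 hl
    rcases (show j + 1 = l ∨ j + 1 < l by omega) with rfl | hlt
    · exact le_max_of_le_left (by omega)
    · have := le_admBound_of_mem (k := k) (Finset.mem_Ioc.2 ⟨hlt, hln⟩)
      exact le_max_of_le_right (by omega)
  · refine max_le ?_ (Nat.sub_le_of_le_add (max_le (Finset.sup_le fun l hl => ?_) ?_))
    · have := le_admBound_of_mem (k := k) (Finset.mem_Ioc.2 ⟨lt_add_one j, hj⟩)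
      omega
    · obtain ⟨hjl, hln⟩ := Finset.mem_Ioc.1 hl
      have := le_admBound_of_mem (k := k) (Finset.mem_Ioc.2 ⟨(lt_add_one j).trans hjl, hln⟩)
      omega
    · have := self_le_admBound (n := n) (k := k) j
      omega

lemma Admissible.admBound_le (hk : Admissible n k) {j : ℕ} (hj : j ≤ n) :
    admBound n k j ≤ n := by
  induction hj using Nat.decreasingInduction with
  | self => simp
  | of_succ j hj ih =>
    have := hk (j + 1) (by omega) hj
    rw [admBound_eq_max_succ hj]
    omega

lemma Admissible.le {j : ℕ} (hk : Admissible n k) (h1 : 1 ≤ j) (h2 : j ≤ n) : k j ≤ n :=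
  (hk j h1 h2).trans (hk.admBound_le h2)

lemma Admissible.admBound_le_defect_iff (hk : Admissible n k) {i t : ℕ} (ht : i + t ≤ n) :
    admBound n k (i + t) ≤ defect k i t ↔ admBound n k i ≤ k i := by
  induction t with
  | zero => rfl
  | succ t ih =>
    have := hk (i + t + 1) (by omega) ht
    have := self_le_admBound (n := n) (k := k) (i + t + 1)
    rw [← ih (by omega), admBound_eq_max_succ (j := i + t) (by omega), ← Nat.add_assoc]
    simp only [defect]
    split_ifs <;> omega

end AdmBound

/-- For an admissible sequence `[k_n, …, k_1]` and `w = c_{k_n,n} ⋯ c_{k_1,1}`, one has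
`k_i = max (max_{i < j ≤ n} (k_j + i + 1 - j)) i` if and only if `1 ≤ w(n+i) ≤ n`
(in one-based terms; in zero-based terms, the value of `w` at `n + i - 1` is `< n`). -/
theorem cycProd_saturated_iff (n : ℕ) (k : ℕ → ℕ) (hk : Admissible n k)
    (i : ℕ) (hi1 : 1 ≤ i) (hi2 : i ≤ n) :
    k i = admBound n k i ↔ ((cycProd n k) ⟨n + i - 1, by omega⟩ : ℕ) < n := by
  have hw := partialProd_apply_add (fun j => hk.le) hi1 hi2 (n - i) (by omega)
  have hdefect := hk.admBound_le_defect_iff (i := i) (t := n - i) (by omega)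
  rw [show i + (n - i) = n by omega] at hw hdefect
  rw [admBound_self] at hdefect
  rw [cycProd_eq_partialProd, hw, le_antisymm_iff, and_iff_right (hk i hi1 hi2), ← hdefect]
  omega
end

section
/- Let n ≥ 1 and σ ∈ S_{2n}. Then the quantities m_{23}, m_{24}, m_{43} and m_{44} are constant on the double coset O_σ: for every t ∈ O_σ one has m_{23}^t = m_{23}^σ, m_{24}^t = m_{24}^σ, m_{43}^t = m_{43}^σ and m_{44}^t = m_{44}^σ. -/
/-- Membership in the set `N_l^t` (`l ∈ {1,2,3,4}`): `N_1` consists of first-half points sent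
to the first half, `N_2` first-half points sent to the second half, `N_3` second-half points
sent to the first half, and `N_4` second-half points sent to the second half. -/
def inN (n : ℕ) (t : Equiv.Perm (Fin (2 * n))) : ℕ → Fin (2 * n) → Prop
  | 1, i => (i : ℕ) < n ∧ (t i : ℕ) < n
  | 2, i => (i : ℕ) < n ∧ n ≤ (t i : ℕ)
  | 3, i => n ≤ (i : ℕ) ∧ (t i : ℕ) < n
  | 4, i => n ≤ (i : ℕ) ∧ n ≤ (t i : ℕ)
  | _, _ => False

/-- The count `m_{lr}^t = #{(i,j) : i ∈ N_l^t, j ∈ N_r^t, i < j, t(j) < t(i)}`. -/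
noncomputable def mcount (n : ℕ) (t : Equiv.Perm (Fin (2 * n))) (l r : ℕ) : ℕ :=
  {p : Fin (2 * n) × Fin (2 * n) |
    inN n t l p.1 ∧ inN n t r p.2 ∧ p.1 < p.2 ∧ t p.2 < t p.1}.ncard

/-- The quantities `m_{23}`, `m_{24}`, `m_{43}` and `m_{44}` are constant on each double
coset `O_σ`. -/
theorem mcount_constant_on_dcoset (n : ℕ) (hn : 1 ≤ n) (σ : Equiv.Perm (Fin (2 * n))) :
    ∀ t ∈ dcoset n σ,
      mcount n t 2 3 = mcount n σ 2 3 ∧ mcount n t 2 4 = mcount n σ 2 4 ∧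
      mcount n t 4 3 = mcount n σ 4 3 ∧ mcount n t 4 4 = mcount n σ 4 4 := by
  rintro t ⟨g, hg, h, hh, rfl⟩
  have hgfix : ∀ x : Fin (2 * n), n ≤ (x : ℕ) → g x = x := hg
  have hhfix : ∀ x : Fin (2 * n), n ≤ (x : ℕ) → h x = x := hh
  have glow : ∀ x : Fin (2 * n), ((g x : ℕ) < n ↔ (x : ℕ) < n) := by
    intro x
    constructor
    · intro hx
      by_contra hxn
      push_neg at hxn
      rw [hgfix x hxn] at hx
      omega
    · intro hx
      by_contra hgx
      push_neg at hgx
      have h2 : g (g x) = g x := hgfix _ hgx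
      have h3 : g x = x := g.injective h2
      rw [h3] at hgx
      omega
  have hlow : ∀ x : Fin (2 * n), ((h x : ℕ) < n ↔ (x : ℕ) < n) := by
    intro x
    constructor
    · intro hx
      by_contra hxn
      push_neg at hxn
      rw [hhfix x hxn] at hx
      omega
    · intro hx
      by_contra hgx
      push_neg at hgx
      have h2 : h (h x) = h x := hhfix _ hgx
      have h3 : h x = x := h.injective h2
      rw [h3] at hgx
      omega
  have tdef : ∀ x : Fin (2 * n), (g * σ * h) x = g (σ (h x)) := fun _ => rfl
  have main : ∀ a b : ℕ,
      (∀ p : Fin (2 * n) × Fin (2 * n),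
        (inN n (g * σ * h) a p.1 ∧ inN n (g * σ * h) b p.2 ∧ p.1 < p.2 ∧
          (g * σ * h) p.2 < (g * σ * h) p.1) ↔
        (inN n σ a (h p.1) ∧ inN n σ b (h p.2) ∧ h p.1 < h p.2 ∧
          σ (h p.2) < σ (h p.1))) →
      mcount n (g * σ * h) a b = mcount n σ a b := by
    intro a b hp
    unfold mcount
    have e := Equiv.prodCongr h h
    have hset : {p : Fin (2 * n) × Fin (2 * n) |
        inN n (g * σ * h) a p.1 ∧ inN n (g * σ * h) b p.2 ∧ p.1 < p.2 ∧
          (g * σ * h) p.2 < (g * σ * h) p.1} =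
        (Equiv.prodCongr h h) ⁻¹' {p : Fin (2 * n) × Fin (2 * n) |
          inN n σ a p.1 ∧ inN n σ b p.2 ∧ p.1 < p.2 ∧ σ p.2 < σ p.1} := by
      ext p
      simp only [Set.mem_preimage, Set.mem_setOf_eq, Equiv.prodCongr_apply, Prod.map]
      exact hp p
    rw [hset]
    have himg : (Equiv.prodCongr h h) ⁻¹' {p : Fin (2 * n) × Fin (2 * n) |
          inN n σ a p.1 ∧ inN n σ b p.2 ∧ p.1 < p.2 ∧ σ p.2 < σ p.1} =
        (Equiv.prodCongr h h).symm '' {p : Fin (2 * n) × Fin (2 * n) |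
          inN n σ a p.1 ∧ inN n σ b p.2 ∧ p.1 < p.2 ∧ σ p.2 < σ p.1} := by
      rw [Equiv.image_eq_preimage_symm, Equiv.symm_symm]
    rw [himg, Set.ncard_image_of_injective _ (Equiv.injective _)]
  refine ⟨main 2 3 ?_, main 2 4 ?_, main 4 3 ?_, main 4 4 ?_⟩ <;>
  · intro p
    obtain ⟨p1, p2⟩ := p
    have f1 := hlow p1
    have f2 := hlow p2
    have f3 := glow (σ (h p1))
    have f4 := glow (σ (h p2))
    have f5 : n ≤ (p1 : ℕ) → ((h p1 : Fin (2 * n)) : ℕ) = (p1 : ℕ) := fun hx =>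
      congrArg Fin.val (hhfix p1 hx)
    have f6 : n ≤ (p2 : ℕ) → ((h p2 : Fin (2 * n)) : ℕ) = (p2 : ℕ) := fun hx =>
      congrArg Fin.val (hhfix p2 hx)
    have f7 : n ≤ ((σ (h p1) : Fin (2 * n)) : ℕ) →
        ((g (σ (h p1)) : Fin (2 * n)) : ℕ) = ((σ (h p1) : Fin (2 * n)) : ℕ) := fun hx =>
      congrArg Fin.val (hgfix _ hx)
    have f8 : n ≤ ((σ (h p2) : Fin (2 * n)) : ℕ) →
        ((g (σ (h p2)) : Fin (2 * n)) : ℕ) = ((σ (h p2) : Fin (2 * n)) : ℕ) := fun hx =>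
      congrArg Fin.val (hgfix _ hx)
    simp only [inN, tdef, Fin.lt_def]
    omega
end

section
/- Let n ≥ 1 and σ ∈ S_{2n}. Then every t ∈ O_σ satisfies the lower bound ℓ(t) ≥ m_{23}^σ + m_{24}^σ + m_{43}^σ + m_{44}^σ. -/
theorem Set.ncard_and_add_ncard_and_not {α : Type*} [Finite α] (P Q : α → Prop) :
    {x | P x ∧ Q x}.ncard + {x | P x ∧ ¬Q x}.ncard = {x | P x}.ncard :=
  Set.ncard_inter_add_ncard_sdiff_eq_ncard {x | P x} {x | Q x} (Set.toFinite _)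

section Sfix

variable {n : ℕ} {g : Equiv.Perm (Fin (2 * n))}

theorem inv_mem_Sfix (hg : g ∈ Sfix n) : g⁻¹ ∈ Sfix n :=
  fun i hi => Equiv.Perm.inv_eq_iff_eq.mpr (hg i hi).symm

theorem apply_lt_of_mem_Sfix (hg : g ∈ Sfix n) {i : Fin (2 * n)} (hi : (i : ℕ) < n) :
    (g i : ℕ) < n := by
  by_contra! hgi
  have : g i = i := g.injective (hg (g i) hgi)
  omega

theorem apply_lt_of_mem_Sfix_of_le {x y : Fin (2 * n)} (hg : g ∈ Sfix n) (hxy : x < y)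
    (hy : n ≤ (y : ℕ)) : g x < y := by
  rcases lt_or_ge (x : ℕ) n with hx | hx
  · exact Fin.lt_def.mpr (by have := apply_lt_of_mem_Sfix hg hx; omega)
  · rwa [hg x hx]

end Sfix

def highInversions (n : ℕ) (σ : Equiv.Perm (Fin (2 * n))) : Set (Fin (2 * n) × Fin (2 * n)) :=
  {p | n ≤ (σ p.1 : ℕ) ∧ n ≤ (p.2 : ℕ) ∧ p.1 < p.2 ∧ σ p.2 < σ p.1}

section Counting

variable {n : ℕ} (σ : Equiv.Perm (Fin (2 * n)))

theorem mcount_three_add_mcount_four (l : ℕ) :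
    mcount n σ l 3 + mcount n σ l 4 =
      {p : Fin (2 * n) × Fin (2 * n) |
        inN n σ l p.1 ∧ n ≤ (p.2 : ℕ) ∧ p.1 < p.2 ∧ σ p.2 < σ p.1}.ncard := by
  rw [mcount, mcount]
  conv_rhs => rw [← Set.ncard_and_add_ncard_and_not _ fun p => (σ p.2 : ℕ) < n]
  congr 2 <;> ext p <;> simp only [inN, Set.mem_ofPred_eq, not_lt] <;> tauto

theorem mcount_sum_eq_ncard_highInversions :
    mcount n σ 2 3 + mcount n σ 2 4 + mcount n σ 4 3 + mcount n σ 4 4 =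
      (highInversions n σ).ncard := by
  rw [add_assoc, mcount_three_add_mcount_four, mcount_three_add_mcount_four]
  conv_rhs => rw [highInversions, ← Set.ncard_and_add_ncard_and_not _ fun p => (p.1 : ℕ) < n]
  congr 2 <;> ext p <;> simp only [inN, Set.mem_ofPred_eq, not_lt] <;> tauto

end Counting

theorem ncard_highInversions_le_len {n : ℕ} {σ g h : Equiv.Perm (Fin (2 * n))}
    (hg : g ∈ Sfix n) (hh : h ∈ Sfix n) : (highInversions n σ).ncard ≤ len n (g * σ * h) := by
  refine Set.ncard_le_ncard_of_injOn (fun p => (h⁻¹ p.1, p.2)) ?_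
    (fun p _ q _ hpq => Prod.ext (h⁻¹.injective (Prod.ext_iff.mp hpq).1) (Prod.ext_iff.mp hpq).2)
  rintro ⟨i, j⟩ ⟨hσi, hj, hij, hσij⟩
  have hgσi : g (σ i) = σ i := hg (σ i) hσi
  refine ⟨apply_lt_of_mem_Sfix_of_le (inv_mem_Sfix hh) hij hj, ?_⟩
  simpa [Equiv.Perm.mul_apply, hh j hj, hgσi] using apply_lt_of_mem_Sfix_of_le hg hσij hσi

theorem length_lower_bound_on_dcoset_general (n : ℕ) (σ : Equiv.Perm (Fin (2 * n))) :
    ∀ t ∈ dcoset n σ,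
      mcount n σ 2 3 + mcount n σ 2 4 + mcount n σ 4 3 + mcount n σ 4 4 ≤ len n t := by
  rintro t ⟨g, hg, h, hh, rfl⟩
  rw [mcount_sum_eq_ncard_highInversions]
  exact ncard_highInversions_le_len hg hh

/-- Every element `t` of the double coset `O_σ` satisfies the lower bound
`ℓ(t) ≥ m_{23}^σ + m_{24}^σ + m_{43}^σ + m_{44}^σ`. -/
theorem length_lower_bound_on_dcoset (n : ℕ) (hn : 1 ≤ n) (σ : Equiv.Perm (Fin (2 * n))) :
    ∀ t ∈ dcoset n σ,
      mcount n σ 2 3 + mcount n σ 2 4 + mcount n σ 4 3 + mcount n σ 4 4 ≤ len n t :=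
  length_lower_bound_on_dcoset_general n σ
end

section
/- Let H be a complex Hilbert space, 0 < q < 1, and let X be a bounded linear operator on H satisfying X*X = q² X X* + (1 − q²)·I. If ker X* = {0}, then X is a unitary operator, i.e. X*X = I and X X* = I. -/
/-!
The relation gives `‖X v‖² = q² ‖X* v‖² + (1 - q²) ‖v‖²`, so `X` is bounded below; since
`ker X* = 0` its range is also dense, hence `X` is invertible. The self-adjoint operator
`A = 1 - X X*` satisfies `X* A = q² A X*`, so conjugating by the unit `X*` shows that the spectrum of
`A` is invariant under multiplication by `q² < 1`. Its spectral radius, which is `‖A‖`, therefore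
vanishes, so `X X* = 1`, and then `X* X = 1` by the relation.
-/

open ContinuousLinearMap

open scoped NNReal ENNReal InnerProductSpace Pointwise

theorem spectralRadius_eq_zero_of_mul_eq_smul_mul {𝕜 A : Type*} [NormedField 𝕜] [NormedRing A]
    [NormedAlgebra 𝕜 A] [CompleteSpace A] {a : A} (u : Aˣ) {c : 𝕜} (hc : ‖c‖ < 1)
    (h : ↑u * a = c • (a * ↑u)) : spectralRadius 𝕜 a = 0 := by
  rcases eq_or_ne c 0 with rfl | hc0
  · have ha : a = 0 := by simpa using congrArg (((u⁻¹ : Aˣ) : A) * ·) h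
    simp [ha]
  have hconj : a = c • (↑u⁻¹ * a * ↑u) := by
    rw [mul_assoc, ← mul_smul_comm, ← h, ← mul_assoc, u.inv_mul, one_mul]
  have hσ : spectrum 𝕜 a = c • spectrum 𝕜 a := by
    conv_lhs => rw [hconj]
    exact (spectrum.unit_smul_eq_smul _ (Units.mk0 c hc0)).trans
      (congrArg _ spectrum.units_conjugate')
  have hle : spectralRadius 𝕜 a ≤ ‖c‖₊ * spectralRadius 𝕜 a := by
    refine iSup₂_le fun k hk => ?_
    rw [hσ] at hk
    obtain ⟨k', hk', rfl⟩ := hk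
    rw [nnnorm_smul, ENNReal.coe_mul]
    gcongr
    exact le_iSup₂ (f := fun k (_ : k ∈ spectrum 𝕜 a) => (‖k‖₊ : ℝ≥0∞)) k' hk'
  have hfin : spectralRadius 𝕜 a ≠ ∞ :=
    ne_top_of_le_ne_top (ENNReal.coe_ne_top (r := ‖a‖₊ * ‖(1 : A)‖₊)) <| iSup₂_le fun k hk =>
      ENNReal.coe_le_coe.2 (spectrum.norm_le_norm_mul_of_mem hk)
  by_contra hne
  have hc' : (‖c‖₊ : ℝ≥0∞) < 1 := by exact_mod_cast hc
  exact (one_mul (spectralRadius 𝕜 a) ▸ ENNReal.mul_lt_mul_left hne hfin hc').not_ge hle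

theorem IsSelfAdjoint.eq_zero_of_spectralRadius_eq_zero {A : Type*} [CStarAlgebra A] {a : A}
    (ha : IsSelfAdjoint a) (h : spectralRadius ℂ a = 0) : a = 0 := by
  rwa [ha.spectralRadius_eq_nnnorm, ENNReal.coe_eq_zero, nnnorm_eq_zero] at h

theorem mul_one_sub_mul_eq_smul_of_mul_eq {S R : Type*} [CommRing S] [Ring R] [Algebra S R]
    {a b : R} {c : S} (h : b * a = c • (a * b) + (1 - c) • 1) :
    b * (1 - a * b) = c • ((1 - a * b) * b) := by
  rw [mul_sub, mul_one, ← mul_assoc, h]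
  simp only [add_mul, smul_mul_assoc, one_mul, sub_mul, smul_sub, sub_smul, one_smul, mul_assoc]
  abel

namespace ContinuousLinearMap

variable {𝕜 E : Type*} [RCLike 𝕜] [NormedAddCommGroup E] [InnerProductSpace 𝕜 E]

theorem antilipschitzWith_of_mul_norm_sq_le {F : Type*} [NormedAddCommGroup F]
    [NormedSpace 𝕜 F] {T : E →L[𝕜] F} {c : ℝ} (hc : 0 < c) (h : ∀ v, c * ‖v‖ ^ 2 ≤ ‖T v‖ ^ 2) :
    AntilipschitzWith (Real.toNNReal (√c⁻¹)) T := by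
  refine T.antilipschitz_of_bound fun v => ?_
  rw [Real.coe_toNNReal _ (Real.sqrt_nonneg _)]
  refine (pow_le_pow_iff_left₀ (norm_nonneg _) (by positivity) two_ne_zero).1 ?_
  rw [mul_pow, Real.sq_sqrt (by positivity), inv_mul_eq_div, le_div_iff₀ hc, mul_comm]
  exact h v

variable [CompleteSpace E]

theorem norm_sq_apply_eq_of_adjoint_mul_self_eq {T : E →L[𝕜] E} {t : ℝ}
    (h : adjoint T * T = (t : 𝕜) • (T * adjoint T) + (1 - (t : 𝕜)) • 1) (v : E) :
    ‖T v‖ ^ 2 = t * ‖adjoint T v‖ ^ 2 + (1 - t) * ‖v‖ ^ 2 := by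
  rw [apply_norm_sq_eq_inner_adjoint_right, ← mul_def, h]
  have hT : ⟪v, T (adjoint T v)⟫_𝕜 = (‖adjoint T v‖ : 𝕜) ^ 2 := by
    rw [← adjoint_inner_left, inner_self_eq_norm_sq_to_K]
  simp [inner_add_right, inner_smul_right, hT, inner_self_eq_norm_sq_to_K]

theorem isUnit_of_antilipschitzWith_of_ker_adjoint_eq_bot {T : E →L[𝕜] E} {K : ℝ≥0}
    (hT : AntilipschitzWith K T) (hker : LinearMap.ker (adjoint T : E →ₗ[𝕜] E) = ⊥) : IsUnit T := by
  refine isUnit_iff_bijective.2 <| (bijective_iff_dense_range_and_antilipschitz T).2 ⟨?_, K, hT⟩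
  rw [← Submodule.orthogonal_orthogonal_eq_closure, orthogonal_range]
  exact hker ▸ Submodule.bot_orthogonal_eq_top

end ContinuousLinearMap

/-- If a bounded operator `X` on a complex Hilbert space satisfies
`X*X = q² X X* + (1 - q²) I` with `0 < q < 1`, and `ker X* = {0}`, then `X` is unitary:
`X*X = I` and `X X* = I`. -/
theorem unitary_of_qrelation_of_ker_adjoint_eq_bot
    {H : Type*} [NormedAddCommGroup H] [InnerProductSpace ℂ H] [CompleteSpace H]
    (q : ℝ) (hq0 : 0 < q) (hq1 : q < 1) (X : H →L[ℂ] H)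
    (hrel : adjoint X * X = ((q : ℂ) ^ 2) • (X * adjoint X) + (1 - (q : ℂ) ^ 2) • 1)
    (hker : LinearMap.ker (adjoint X : H →ₗ[ℂ] H) = ⊥) :
    adjoint X * X = 1 ∧ X * adjoint X = 1 := by
  rw [← Complex.ofReal_pow] at hrel
  have hq2 : q ^ 2 < 1 := by nlinarith
  have hbound (v : H) : (1 - q ^ 2) * ‖v‖ ^ 2 ≤ ‖X v‖ ^ 2 := by
    rw [norm_sq_apply_eq_of_adjoint_mul_self_eq (t := q ^ 2) hrel v]
    nlinarith [sq_nonneg ‖adjoint X v‖]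
  have hX : IsUnit X := isUnit_of_antilipschitzWith_of_ker_adjoint_eq_bot
    (antilipschitzWith_of_mul_norm_sq_le (sub_pos.2 hq2) hbound) hker
  have hradius : spectralRadius ℂ (1 - X * adjoint X) = 0 := by
    refine spectralRadius_eq_zero_of_mul_eq_smul_mul hX.star.unit (c := ((q ^ 2 : ℝ) : ℂ))
      ?_ (mul_one_sub_mul_eq_smul_of_mul_eq hrel)
    rwa [Complex.norm_real, Real.norm_of_nonneg (by positivity)]
  have hA : IsSelfAdjoint (1 - X * adjoint X) := (IsSelfAdjoint.one _).sub (.mul_star_self X)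
  have hXX : X * adjoint X = 1 :=
    (sub_eq_zero.1 (hA.eq_zero_of_spectralRadius_eq_zero hradius)).symm
  refine ⟨?_, hXX⟩
  rw [hrel, hXX, ← add_smul, add_sub_cancel, one_smul]
end

section
/- Let H be a complex Hilbert space, let U be a bounded linear operator on H that is an isometry (U*U = I), let A be a bounded linear operator on H, and let c be a complex scalar with |c| < 1. If U A = c · A U, then A = 0. -/
open ContinuousLinearMap

namespace ContinuousLinearMap

variable {𝕜 E : Type*} [NontriviallyNormedField 𝕜] [NormedAddCommGroup E] [NormedSpace 𝕜 E]

theorem opNorm_le_norm_mul_opNorm_of_mul_eq_smul_mul {U A : E →L[𝕜] E} {c : 𝕜}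
    (hU : ∀ x, ‖U x‖ = ‖x‖) (h : U * A = c • (A * U)) : ‖A‖ ≤ ‖c‖ * ‖A‖ := by
  refine A.opNorm_le_bound (by positivity) fun x ↦ ?_
  have hUA : U (A x) = c • A (U x) := by simpa using congr($h x)
  calc ‖A x‖ = ‖U (A x)‖ := (hU (A x)).symm
    _ = ‖c‖ * ‖A (U x)‖ := by rw [hUA, norm_smul]
    _ ≤ ‖c‖ * (‖A‖ * ‖U x‖) := by gcongr; exact A.le_opNorm (U x)
    _ = ‖c‖ * ‖A‖ * ‖x‖ := by rw [hU x, mul_assoc]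

theorem eq_zero_of_mul_eq_smul_mul {U A : E →L[𝕜] E} {c : 𝕜}
    (hU : ∀ x, ‖U x‖ = ‖x‖) (hc : ‖c‖ < 1) (h : U * A = c • (A * U)) : A = 0 := by
  have hA := opNorm_le_norm_mul_opNorm_of_mul_eq_smul_mul hU h
  rw [← norm_le_zero_iff]
  nlinarith [norm_nonneg A]

end ContinuousLinearMap

/-- If `U` is an isometry (`U*U = I`) on a complex Hilbert space, `A` is a bounded operator,
`c` is a complex scalar with `|c| < 1`, and `U A = c ⬝ A U`, then `A = 0`. -/
theorem eq_zero_of_isometry_qcommute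
    {H : Type*} [NormedAddCommGroup H] [InnerProductSpace ℂ H] [CompleteSpace H]
    (U A : H →L[ℂ] H) (hU : adjoint U * U = 1)
    (c : ℂ) (hc : ‖c‖ < 1) (h : U * A = c • (A * U)) :
    A = 0 :=
  eq_zero_of_mul_eq_smul_mul ((norm_map_iff_adjoint_comp_self U).mpr hU) hc h
end

section
/- Let T be an n×n complex matrix which is a contraction, i.e. I − T*T is positive semidefinite. Then the 2n×2n block matrix [[T*, (I − T*T)^{1/2}], [−(I − T T*)^{1/2}, T]] is a special unitary matrix: it is unitary and has determinant 1. -/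
/-!
With `P = (I - T*T)^{1/2}` and `Q = (I - TT*)^{1/2}`, the identity `T (I - T*T) = (I - TT*) T`
passes to square roots, giving `T P = Q T`; together with `P² + T*T = I = Q² + TT*` this makes
`M = [[T*, P], [-Q, T]]` unitary by direct block multiplication. For the determinant, let `S` be
the block swap `[[0, I], [I, 0]]`. Then `M S = [[P, T*], [T, -Q]]` is a Hermitian unitary, so its
eigenvalues are `±1` and its determinant is determined by its trace `tr P - tr Q`. This trace
vanishes because `T*T` and `TT*` have the same characteristic polynomial, hence so do `P` and `Q`.
The same count for `S` gives `det M = det (M S) · det S = 1`.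
-/

open Matrix
open scoped ComplexOrder

namespace Matrix

variable {n : Type*} [Fintype n]

theorem trace_fromBlocks {α : Type*} [AddCommMonoid α] (A B C D : Matrix n n α) :
    (fromBlocks A B C D).trace = A.trace + D.trace := by
  simp [trace, Fintype.sum_sum_type]

variable [DecidableEq n]

theorem fromBlocks_conjTranspose_mul_self_eq_one {α : Type*} [CommRing α] [StarRing α]
    {T P Q : Matrix n n α} (hP : P.IsHermitian) (hQ : Q.IsHermitian)
    (hP2 : P * P = 1 - Tᴴ * T) (hQ2 : Q * Q = 1 - T * Tᴴ) (hTP : T * P = Q * T) :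
    (fromBlocks Tᴴ P (-Q) T)ᴴ * fromBlocks Tᴴ P (-Q) T = 1 := by
  have hPT : P * Tᴴ = Tᴴ * Q := by
    simpa [conjTranspose_mul, hP.eq, hQ.eq] using congrArg conjTranspose hTP
  rw [fromBlocks_conjTranspose, conjTranspose_conjTranspose, conjTranspose_neg, hP.eq, hQ.eq,
    fromBlocks_multiply, ← fromBlocks_one]
  congr 1
  · rw [neg_mul_neg, hQ2]; abel
  · rw [neg_mul, hTP]; abel
  · rw [mul_neg, hPT]; abel
  · rw [hP2]; abel

section RCLike

open scoped MatrixOrder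

variable {𝕜 : Type*} [RCLike 𝕜]

theorem PosSemidef.fromBlocks_zero {A B : Matrix n n 𝕜} (hA : A.PosSemidef) (hB : B.PosSemidef) :
    (fromBlocks A 0 0 B).PosSemidef := by
  obtain ⟨C, rfl⟩ := CStarAlgebra.nonneg_iff_eq_star_mul_self.mp hA.nonneg
  obtain ⟨D, rfl⟩ := CStarAlgebra.nonneg_iff_eq_star_mul_self.mp hB.nonneg
  simpa [star_eq_conjTranspose, fromBlocks_multiply, fromBlocks_conjTranspose] using
    posSemidef_conjTranspose_mul_self (fromBlocks C 0 0 D)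

/-- The hypothesis says that `[[0, 0], [T, 0]]` commutes with `R * R` for `R = [[P, 0], [0, Q]]`;
hence it commutes with the positive square root `R` of `R * R`. -/
theorem PosSemidef.mul_eq_mul_of_mul_mul_self_eq {P Q T : Matrix n n 𝕜} (hP : P.PosSemidef)
    (hQ : Q.PosSemidef) (h : T * (P * P) = Q * Q * T) : T * P = Q * T := by
  set R := fromBlocks P 0 0 Q
  have hR : CFC.sqrt (R * R) = R := CFC.sqrt_mul_self R (hP.fromBlocks_zero hQ).nonneg
  have hcomm : Commute (R * R) (fromBlocks 0 0 T 0) := by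
    simp [Commute, SemiconjBy, R, fromBlocks_multiply, h]
  have := (hR ▸ hcomm.cfcₙ_nnreal NNReal.sqrt : Commute R (fromBlocks 0 0 T 0))
  simpa [Commute, SemiconjBy, R, fromBlocks_multiply, eq_comm] using this

theorem IsHermitian.charpoly_cfc_eq_of_charpoly_eq {A B : Matrix n n 𝕜} (hA : A.IsHermitian)
    (hB : B.IsHermitian) (h : A.charpoly = B.charpoly) (f : ℝ → ℝ) :
    (cfc f A).charpoly = (cfc f B).charpoly := by
  rw [hA.charpoly_cfc_eq, hB.charpoly_cfc_eq, (hA.eigenvalues_eq_eigenvalues_iff hB).2 h]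

theorem IsHermitian.one_sub_eq_cfc {A : Matrix n n 𝕜} (hA : A.IsHermitian) :
    1 - A = cfc (fun x : ℝ => 1 - x) A := by
  have : IsSelfAdjoint A := hA
  rw [cfc_sub (fun _ : ℝ => 1) (fun x => x) A, cfc_const_one ℝ A, cfc_id' ℝ A]

theorem charpoly_one_sub_conjTranspose_mul_self (T : Matrix n n 𝕜) :
    (1 - Tᴴ * T).charpoly = (1 - T * Tᴴ).charpoly := by
  rw [(isHermitian_conjTranspose_mul_self T).one_sub_eq_cfc,
    (isHermitian_mul_conjTranspose_self T).one_sub_eq_cfc]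
  exact (isHermitian_conjTranspose_mul_self T).charpoly_cfc_eq_of_charpoly_eq
    (isHermitian_mul_conjTranspose_self T) (charpoly_mul_comm _ _) _

theorem PosSemidef.eq_cfc_sqrt_mul_self {P : Matrix n n 𝕜} (hP : P.PosSemidef) :
    P = cfc Real.sqrt (P * P) := by
  have hPP : 0 ≤ P * P := by simpa [hP.1.star_eq] using star_mul_self_nonneg P
  rw [← cfcₙ_eq_cfc (hf0 := Real.sqrt_zero), ← CFC.sqrt_eq_real_sqrt _ hPP,
    CFC.sqrt_mul_self P hP.nonneg]

theorem PosSemidef.trace_eq_of_charpoly_mul_self_eq {P Q : Matrix n n 𝕜} (hP : P.PosSemidef)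
    (hQ : Q.PosSemidef) (h : (P * P).charpoly = (Q * Q).charpoly) : P.trace = Q.trace := by
  have hPQ : P.charpoly = Q.charpoly := by
    rw [hP.eq_cfc_sqrt_mul_self, hQ.eq_cfc_sqrt_mul_self]
    exact (sq P ▸ hP.1.pow 2).charpoly_cfc_eq_of_charpoly_eq (sq Q ▸ hQ.1.pow 2) h _
  rw [hP.1.trace_eq_sum_eigenvalues, hQ.1.trace_eq_sum_eigenvalues,
    (hP.1.eigenvalues_eq_eigenvalues_iff hQ.1).2 hPQ]

end RCLike

section Complex

open Complex
open scoped Real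

theorem IsHermitian.eigenvalues_eq_one_or_eq_neg_one {N : Matrix n n ℂ} (hN : N.IsHermitian)
    (h : N * N = 1) (i : n) : hN.eigenvalues i = 1 ∨ hN.eigenvalues i = -1 := by
  have : Nonempty n := ⟨i⟩
  rw [← mul_self_eq_one_iff, ← sq]
  simpa [sq, h, spectrum.one_eq] using
    spectrum.pow_mem_pow N 2 (hN.eigenvalues_mem_spectrum_real i)

theorem IsHermitian.det_eq_exp_of_mul_self_eq_one {N : Matrix n n ℂ} (hN : N.IsHermitian)
    (h : N * N = 1) :
    N.det = Complex.exp (π * I / 2 * ((Fintype.card n : ℂ) - N.trace)) := by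
  -- `λ = exp (π i (1 - λ) / 2)` for `λ = ±1`, so the product of the eigenvalues is an exponential
  -- of their sum.
  have hμ (i : n) :
      (hN.eigenvalues i : ℂ) = Complex.exp (π * I / 2 * (1 - hN.eigenvalues i)) := by
    rcases hN.eigenvalues_eq_one_or_eq_neg_one h i with h1 | h1 <;> rw [h1]
    · simp
    · push_cast
      rw [show π * I / 2 * (1 - -1) = π * I by ring, exp_pi_mul_I]
  rw [hN.det_eq_prod_eigenvalues, hN.trace_eq_sum_eigenvalues, RCLike.ofReal_eq_complex_ofReal,
    ← Finset.card_univ, Finset.card_eq_sum_ones, Finset.prod_congr rfl fun i _ => hμ i, ← exp_sum]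
  push_cast
  rw [← Finset.sum_sub_distrib, Finset.mul_sum]

theorem det_fromBlocks_eq_one {T P Q : Matrix n n ℂ} (hP : P.IsHermitian) (hQ : Q.IsHermitian)
    (hU : (fromBlocks Tᴴ P (-Q) T)ᴴ * fromBlocks Tᴴ P (-Q) T = 1) (htr : P.trace = Q.trace) :
    (fromBlocks Tᴴ P (-Q) T).det = 1 := by
  set M := fromBlocks Tᴴ P (-Q) T
  set S : Matrix (n ⊕ n) (n ⊕ n) ℂ := fromBlocks 0 1 1 0
  have hS : S.IsHermitian := by simp [S, IsHermitian, fromBlocks_conjTranspose]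
  have hSS : S * S = 1 := by simp [S, fromBlocks_multiply]
  have hN : (M * S).IsHermitian := by
    simp [M, S, IsHermitian, fromBlocks_multiply, fromBlocks_conjTranspose, hP.eq, hQ.eq]
  have hNN : M * S * (M * S) = 1 :=
    calc M * S * (M * S) = (M * S)ᴴ * (M * S) := by rw [hN.eq]
      _ = S * (Mᴴ * M) * S := by rw [conjTranspose_mul, hS.eq]; noncomm_ring
      _ = 1 := by rw [hU, mul_one, hSS]
  have htrN : (M * S).trace = 0 := by simp [M, S, fromBlocks_multiply, trace_fromBlocks, htr]
  have htrS : S.trace = 0 := by simp [S, trace_fromBlocks]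
  rw [show M = M * S * S by rw [mul_assoc, hSS, mul_one], det_mul,
    hN.det_eq_exp_of_mul_self_eq_one hNN, hS.det_eq_exp_of_mul_self_eq_one hSS, ← exp_add,
    htrN, htrS, ← exp_nat_mul_two_pi_mul_I (Fintype.card n), Fintype.card_sum]
  push_cast
  ring_nf

end Complex

end Matrix

theorem contraction_block_special_unitary_general (n : ℕ) (T : Matrix (Fin n) (Fin n) ℂ)
    (P Q : Matrix (Fin n) (Fin n) ℂ)
    (hP : P.PosSemidef) (hP2 : P * P = 1 - Tᴴ * T)
    (hQ : Q.PosSemidef) (hQ2 : Q * Q = 1 - T * Tᴴ) :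
    (Matrix.fromBlocks Tᴴ P (-Q) T)ᴴ * Matrix.fromBlocks Tᴴ P (-Q) T = 1 ∧
    Matrix.fromBlocks Tᴴ P (-Q) T * (Matrix.fromBlocks Tᴴ P (-Q) T)ᴴ = 1 ∧
    (Matrix.fromBlocks Tᴴ P (-Q) T).det = 1 := by
  have hTP : T * P = Q * T :=
    hP.mul_eq_mul_of_mul_mul_self_eq hQ (by rw [hP2, hQ2]; noncomm_ring)
  have htr : P.trace = Q.trace := hP.trace_eq_of_charpoly_mul_self_eq hQ
    (by rw [hP2, hQ2, charpoly_one_sub_conjTranspose_mul_self])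
  have hU := fromBlocks_conjTranspose_mul_self_eq_one hP.1 hQ.1 hP2 hQ2 hTP
  exact ⟨hU, mul_eq_one_comm.mp hU, det_fromBlocks_eq_one hP.1 hQ.1 hU htr⟩

/-- If `T` is an `n × n` complex contraction matrix (i.e. `I - T*T` is positive semidefinite),
and `P`, `Q` are the positive semidefinite square roots of `I - T*T` and `I - T T*`
respectively, then the `2n × 2n` block matrix `[[T*, P], [-Q, T]]` is a special unitary
matrix: it is unitary and has determinant `1`. -/
theorem contraction_block_special_unitary (n : ℕ) (T : Matrix (Fin n) (Fin n) ℂ)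
    (hT : (1 - Tᴴ * T).PosSemidef)
    (P Q : Matrix (Fin n) (Fin n) ℂ)
    (hP : P.PosSemidef) (hP2 : P * P = 1 - Tᴴ * T)
    (hQ : Q.PosSemidef) (hQ2 : Q * Q = 1 - T * Tᴴ) :
    (Matrix.fromBlocks Tᴴ P (-Q) T)ᴴ * Matrix.fromBlocks Tᴴ P (-Q) T = 1 ∧
    Matrix.fromBlocks Tᴴ P (-Q) T * (Matrix.fromBlocks Tᴴ P (-Q) T)ᴴ = 1 ∧
    (Matrix.fromBlocks Tᴴ P (-Q) T).det = 1 :=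
  contraction_block_special_unitary_general n T P Q hP hP2 hQ hQ2
end
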